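/- arXiv:1502.03899 — 3 statements merged into one kernel-verified Lean document; each statement's English description precedes it below -/
import Mathlib

section
/- The function k(x) − 1/√(πx), where k(x) = (1/√(πx)) · Σ_{n ∈ ℤ} e^{-n²/x}, extends to a function on [0,1] that is continuous (with value 0 at x = 0); equivalently k̃(x) := (1/√(πx)) · Σ_{n ≠ 0} e^{-n²/x} tends to 0 as x → 0⁺. -/
open Real Filter Topology

lemma summable_gauss_half : Summable (fun n : ℤ => Real.exp (-(n:ℝ)^2 / 2)) := by
  have h := summable_pow_mul_jacobiTheta₂_term_bound 0 (T := 1/(2*π)) (by positivity) 0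
  refine h.congr fun n => ?_
  have hπ : (π:ℝ) ≠ 0 := pi_ne_zero
  simp only [pow_zero, one_mul]
  congr 1
  field_simp
  ring

/-- The regular part `k̃(x) = (1/√(πx)) · Σ_{n ≠ 0} e^{-n²/x}` of the kernel
`k(x) = 1/√(πx) + k̃(x)` tends to `0` as `x → 0⁺`; equivalently, `k(x) − 1/√(πx)`
extends continuously to `[0,1]` with value `0` at `x = 0`. -/
theorem kernel_regular_part_tendsto_zero :
    Filter.Tendsto
      (fun x : ℝ => (1 / Real.sqrt (Real.pi * x)) *
        ∑' n : {n : ℤ // n ≠ 0}, Real.exp (-((n : ℤ) : ℝ) ^ 2 / x))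
      (nhdsWithin 0 (Set.Ioi 0)) (nhds 0) := by
  set C : ℝ := ∑' n : ℤ, Real.exp (-(n:ℝ)^2 / 2) with hC
  have hC0 : 0 ≤ C := tsum_nonneg fun n => (Real.exp_pos _).le
  -- the majorant tends to 0
  have hmaj : Tendsto (fun x : ℝ => (x⁻¹ ^ (1/2:ℝ) * Real.exp (-(1/2) * x⁻¹)) * (C / Real.sqrt π))
      (nhdsWithin 0 (Set.Ioi 0)) (nhds 0) := by
    have h1 := (tendsto_rpow_mul_exp_neg_mul_atTop_nhds_zero (1/2) (1/2) (by norm_num)).comp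
      tendsto_inv_nhdsGT_zero
    have h2 := h1.mul_const (C / Real.sqrt π)
    rwa [zero_mul] at h2
  have hev : ∀ᶠ x in nhdsWithin (0:ℝ) (Set.Ioi 0), x ∈ Set.Ioo (0:ℝ) 1 :=
    Ioo_mem_nhdsGT_of_mem (by norm_num : (0:ℝ) ∈ Set.Ico 0 1)
  refine tendsto_of_tendsto_of_tendsto_of_le_of_le' tendsto_const_nhds hmaj ?_ ?_
  · -- nonnegativity
    filter_upwards [hev] with x hx
    exact mul_nonneg (by positivity) (tsum_nonneg fun n => (Real.exp_pos _).le)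
  · filter_upwards [hev] with x hx
    obtain ⟨hx0, hx1⟩ := hx
    -- summability facts
    have hle : ∀ n : {n : ℤ // n ≠ 0}, Real.exp (-((n:ℤ):ℝ)^2 / x) ≤
        Real.exp (-(1/(2*x))) * Real.exp (-((n:ℤ):ℝ)^2 / 2) := by
      intro n
      rw [← Real.exp_add]
      apply Real.exp_le_exp.mpr
      have h1 : (1:ℝ) ≤ ((n:ℤ):ℝ)^2 := by
        have h1' : (1:ℤ) ≤ (n:ℤ)^2 := by
          have hn := n.2
          have : (n:ℤ) ≤ -1 ∨ 1 ≤ (n:ℤ) := by omega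
          rcases this with h | h <;> nlinarith
        exact_mod_cast h1'
      have key : 1/(2*x) + ((n:ℤ):ℝ)^2/2 ≤ ((n:ℤ):ℝ)^2 / x := by
        rw [div_add_div _ _ (by positivity) (by norm_num), div_le_div_iff₀ (by positivity) hx0]
        have A : x * 1 ≤ x * ((n:ℤ):ℝ)^2 := mul_le_mul_of_nonneg_left h1 hx0.le
        have B : x * x * ((n:ℤ):ℝ)^2 ≤ 1 * x * ((n:ℤ):ℝ)^2 := by
          apply mul_le_mul_of_nonneg_right _ (by positivity)
          nlinarith
        nlinarith
      rw [neg_div, neg_div]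
      linarith
    have hsum2 : Summable (fun n : ℤ => Real.exp (-(1/(2*x))) * Real.exp (-(n:ℝ)^2 / 2)) :=
      summable_gauss_half.mul_left _
    have hsum1 : Summable (fun n : {n : ℤ // n ≠ 0} => Real.exp (-((n:ℤ):ℝ)^2 / x)) := by
      apply Summable.of_nonneg_of_le (fun n => (Real.exp_pos _).le) hle
      exact (hsum2.subtype _).congr (fun n => rfl)
    have hstep1 : (∑' n : {n : ℤ // n ≠ 0}, Real.exp (-((n:ℤ):ℝ)^2 / x)) ≤
        Real.exp (-(1/(2*x))) * C := by
      calc (∑' n : {n : ℤ // n ≠ 0}, Real.exp (-((n:ℤ):ℝ)^2 / x))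
          ≤ ∑' n : {n : ℤ // n ≠ 0}, Real.exp (-(1/(2*x))) * Real.exp (-((n:ℤ):ℝ)^2 / 2) :=
            Summable.tsum_le_tsum hle hsum1 ((hsum2.subtype _).congr (fun n => rfl))
        _ = Real.exp (-(1/(2*x))) * ∑' n : {n : ℤ // n ≠ 0}, Real.exp (-((n:ℤ):ℝ)^2 / 2) := by
            rw [tsum_mul_left]
        _ ≤ Real.exp (-(1/(2*x))) * C := by
            apply mul_le_mul_of_nonneg_left _ (Real.exp_pos _).le
            exact Summable.tsum_subtype_le (fun n : ℤ => Real.exp (-(n:ℝ)^2 / 2)) _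
              (fun n => (Real.exp_pos _).le) summable_gauss_half
    -- now combine
    have hsqrt : 1 / Real.sqrt (π * x) = x⁻¹ ^ (1/2:ℝ) / Real.sqrt π := by
      rw [Real.sqrt_mul pi_pos.le, ← Real.sqrt_eq_rpow x⁻¹, Real.sqrt_inv]
      field_simp
    calc (1 / Real.sqrt (π * x)) * (∑' n : {n : ℤ // n ≠ 0}, Real.exp (-((n:ℤ):ℝ)^2 / x))
        ≤ (1 / Real.sqrt (π * x)) * (Real.exp (-(1/(2*x))) * C) :=
          mul_le_mul_of_nonneg_left hstep1 (by positivity)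
      _ = (x⁻¹ ^ (1/2:ℝ) * Real.exp (-(1/2) * x⁻¹)) * (C / Real.sqrt π) := by
          rw [hsqrt, show -(1/(2*x)) = -(1/2) * x⁻¹ by field_simp]
          ring
end

section
/- For fixed y ∈ (0,1) and ξ > 0, define G₀(t,y) = (1/(2√π t^{3/2})) Σ_{n ∈ ℤ} (y+2n) e^{-(y+2n)²/(4t)}. Then ∫₀^ξ G₀(t,y) dt = (2/√π) Σ_{n=0}^∞ ∫_{(y+2n)/(2√ξ)}^{(2n+2−y)/(2√ξ)} e^{-t²} dt. -/
open Real MeasureTheory intervalIntegral Set Filter Topology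

/-!
With `a = y + 2n`, the `n`-th term of `G₀(t, y)` is `∂ₜ(-erf(a / (2√t)))`, and
`erf(a / (2√t)) → sign a` as `t → 0⁺`; hence its integral over `(0, ξ]` is
`sign a - erf(a / (2√ξ))`. The `L¹(0, ξ)` norm of the term is at most `√2 e^{-a²/(8ξ)}`, which is
summable over `n ∈ ℤ`, so summation and integration commute. Pairing `n` with `-n - 1`
(where `a = y + 2n > 0` and `a = y - 2n - 2 < 0`) the signs cancel, leaving
`erf((2n + 2 - y) / (2√ξ)) - erf((y + 2n) / (2√ξ))`.
-/

noncomputable def erf (x : ℝ) : ℝ := 2 / √π * ∫ s in (0:ℝ)..x, exp (-s ^ 2)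

lemma continuous_exp_neg_sq : Continuous fun s : ℝ => exp (-s ^ 2) := by fun_prop

lemma hasDerivAt_erf (x : ℝ) : HasDerivAt erf (2 / √π * exp (-x ^ 2)) x :=
  ((continuous_exp_neg_sq.integral_hasStrictDerivAt 0 x).hasDerivAt).const_mul _

lemma erf_nonneg {x : ℝ} (hx : 0 ≤ x) : 0 ≤ erf x :=
  mul_nonneg (by positivity) (integral_nonneg hx fun s _ => (exp_pos _).le)

lemma erf_neg (x : ℝ) : erf (-x) = -erf x := by
  have h := integral_comp_neg (a := 0) (b := x) fun s => exp (-s ^ 2)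
  simp only [neg_sq, neg_zero] at h
  rw [erf, erf, h, integral_symm, mul_neg]

lemma erf_sub_erf (p q : ℝ) : erf q - erf p = 2 / √π * ∫ s in p..q, exp (-s ^ 2) := by
  rw [erf, erf, ← mul_sub, integral_interval_sub_left (continuous_exp_neg_sq.intervalIntegrable _ _)
    (continuous_exp_neg_sq.intervalIntegrable _ _)]

lemma tendsto_erf_atTop : Tendsto erf atTop (𝓝 1) := by
  have hint : IntegrableOn (fun s : ℝ => exp (-s ^ 2)) (Ioi 0) := by
    simpa using (integrable_exp_neg_mul_sq one_pos).integrableOn (s := Ioi (0:ℝ))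
  have hval : ∫ s in Ioi (0:ℝ), exp (-s ^ 2) = √π / 2 := by
    simpa using integral_gaussian_Ioi 1
  have h := (intervalIntegral_tendsto_integral_Ioi 0 hint tendsto_id).const_mul (2 / √π)
  rwa [hval, div_mul_div_cancel₀ (sqrt_pos.2 pi_pos).ne', div_self two_ne_zero] at h

lemma integral_eq_sub_of_hasDerivAt_of_tendsto_of_nonneg {f f' : ℝ → ℝ} {a b L : ℝ}
    (hab : a < b) (hderiv : ∀ x ∈ Ioc a b, HasDerivAt f (f' x) x)
    (hf' : ∀ x ∈ Ioo a b, 0 ≤ f' x) (hL : Tendsto f (𝓝[>] a) (𝓝 L)) :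
    IntervalIntegrable f' volume a b ∧ ∫ x in a..b, f' x = f b - L := by
  classical
  -- Redefining `f` at `a` makes it continuous on `[a, b]`, so `f' ≥ 0` yields integrability.
  let g := Function.update f a L
  have hg : ∀ x ∈ Ioc a b, g =ᶠ[𝓝 x] f := fun x hx =>
    (eventually_ne_nhds hx.1.ne').mono fun z hz => Function.update_of_ne hz _ _
  have hcont : ContinuousOn g (Icc a b) := by
    intro x hx
    rcases hx.1.eq_or_lt with rfl | hax
    · exact continuousWithinAt_update_same.2 <| hL.mono_left <| nhdsWithin_mono _
        fun z hz => lt_of_le_of_ne hz.1.1 (Ne.symm hz.2)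
    · exact ((hderiv x ⟨hax, hx.2⟩).continuousAt.congr (hg x ⟨hax, hx.2⟩).symm).continuousWithinAt
  have hgderiv : ∀ x ∈ Ioo a b, HasDerivAt g (f' x) x := fun x hx =>
    (hderiv x (Ioo_subset_Ioc_self hx)).congr_of_eventuallyEq (hg x (Ioo_subset_Ioc_self hx))
  have hint : IntervalIntegrable f' volume a b :=
    (intervalIntegrable_iff_integrableOn_Ioc_of_le hab.le).2
      (integrableOn_deriv_of_nonneg hcont hgderiv hf')
  refine ⟨hint, ?_⟩
  rw [integral_eq_sub_of_hasDerivAt_of_le hab.le hcont hgderiv hint]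
  simp only [g, Function.update_self, Function.update_of_ne hab.ne']

lemma summable_exp_neg_sq_div {c : ℝ} (hc : 0 < c) {a : ℤ → ℝ}
    (ha : ∀ n : ℤ, |(n:ℝ)| ≤ |a n|) : Summable fun n => exp (-a n ^ 2 / c) := by
  have hsq : ∀ n : ℤ, |(n:ℝ)| ≤ a n ^ 2 := fun n =>
    calc |(n:ℝ)| ≤ |(n:ℝ)| ^ 2 := by exact_mod_cast Int.le_self_sq |n|
      _ ≤ |a n| ^ 2 := pow_le_pow_left₀ (abs_nonneg _) (ha n) 2
      _ = a n ^ 2 := sq_abs _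
  have hnat : ∀ f : ℕ → ℤ, (∀ i : ℕ, (i:ℝ) ≤ |(f i : ℝ)|) →
      Summable fun i => exp (-a (f i) ^ 2 / c) := fun f hf =>
    (summable_exp_nat_mul_of_ge (neg_neg_of_pos (inv_pos.2 hc))
      fun i => (hf i).trans (hsq (f i))).congr fun i => by ring_nf
  refine Summable.of_nat_of_neg_add_one (hnat _ fun i => ?_) (hnat _ fun i => ?_)
  · simp
  · rw [Int.cast_neg, abs_neg]; push_cast
    rw [abs_of_nonneg (by positivity)]; linarith

/-- For `a > 0`, the density of the first time a Brownian motion with generator `∂ₓ²` hits `a`. -/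
noncomputable def firstPassageDensity (a t : ℝ) : ℝ :=
  a * exp (-a ^ 2 / (4 * t)) / (2 * √π * t ^ ((3:ℝ)/2))

lemma rpow_three_halves {t : ℝ} (ht : 0 ≤ t) : t ^ ((3:ℝ)/2) = t * √t := by
  rw [show (3:ℝ)/2 = 1 + 1/2 by norm_num, rpow_add' ht (by norm_num), rpow_one, ← sqrt_eq_rpow]

lemma firstPassageDensity_neg (a : ℝ) : firstPassageDensity (-a) = -firstPassageDensity a :=
  funext fun t => by simp only [firstPassageDensity, neg_sq, neg_mul, neg_div, Pi.neg_apply]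

lemma firstPassageDensity_zero : firstPassageDensity 0 = 0 :=
  funext fun t => by simp [firstPassageDensity]

lemma firstPassageDensity_nonneg {a t : ℝ} (ha : 0 ≤ a) (ht : 0 ≤ t) :
    0 ≤ firstPassageDensity a t := by
  unfold firstPassageDensity
  have := rpow_nonneg ht ((3:ℝ)/2)
  positivity

lemma norm_firstPassageDensity (a : ℝ) {t : ℝ} (ht : 0 ≤ t) :
    ‖firstPassageDensity a t‖ = firstPassageDensity |a| t := by
  have := rpow_nonneg ht ((3:ℝ)/2)
  rw [firstPassageDensity, firstPassageDensity, norm_div, norm_mul, Real.norm_eq_abs,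
    Real.norm_of_nonneg (exp_pos _).le, Real.norm_of_nonneg (by positivity), sq_abs]

lemma hasDerivAt_neg_erf_div_sqrt (a : ℝ) {t : ℝ} (ht : 0 < t) :
    HasDerivAt (fun u => -erf (a / (2 * √u))) (firstPassageDensity a t) t := by
  have hinner : HasDerivAt (fun u => a / (2 * √u)) (-(a / (4 * t * √t))) t := by
    refine ((hasDerivAt_const t a).div ((hasDerivAt_sqrt ht.ne').const_mul 2)
      (by positivity)).congr_deriv ?_
    field_simp
    rw [sq_sqrt ht.le]
    ring
  refine ((hasDerivAt_erf _).comp t hinner).neg.congr_deriv ?_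
  have hsq : (a / (2 * √t)) ^ 2 = a ^ 2 / (4 * t) := by
    rw [div_pow, mul_pow, sq_sqrt ht.le]; norm_num
  rw [firstPassageDensity, rpow_three_halves ht.le, hsq, neg_div]
  field_simp
  ring

lemma tendsto_erf_div_sqrt_nhdsGT_zero {a : ℝ} (ha : 0 < a) :
    Tendsto (fun u => erf (a / (2 * √u))) (𝓝[>] 0) (𝓝 1) := by
  have hsqrt : Tendsto (fun u => 2 * √u) (𝓝[>] 0) (𝓝[>] 0) := by
    refine tendsto_nhdsWithin_of_tendsto_nhds_of_eventually_within _ ?_ ?_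
    · simpa using ((continuous_sqrt.const_mul 2).tendsto (0:ℝ)).mono_left nhdsWithin_le_nhds
    · filter_upwards [self_mem_nhdsWithin] with u hu
      exact mul_pos two_pos (sqrt_pos.2 hu)
  refine tendsto_erf_atTop.comp ?_
  simpa [div_eq_mul_inv] using (tendsto_inv_nhdsGT_zero.comp hsqrt).const_mul_atTop ha

lemma integral_firstPassageDensity_of_pos {a ξ : ℝ} (ha : 0 < a) (hξ : 0 < ξ) :
    IntervalIntegrable (firstPassageDensity a) volume 0 ξ ∧
      ∫ t in (0:ℝ)..ξ, firstPassageDensity a t = 1 - erf (a / (2 * √ξ)) := by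
  have h := integral_eq_sub_of_hasDerivAt_of_tendsto_of_nonneg hξ
    (fun t ht => hasDerivAt_neg_erf_div_sqrt a ht.1)
    (fun t ht => firstPassageDensity_nonneg ha.le ht.1.le)
    (tendsto_erf_div_sqrt_nhdsGT_zero ha).neg
  exact ⟨h.1, by rw [h.2]; ring⟩

lemma intervalIntegrable_firstPassageDensity (a : ℝ) {ξ : ℝ} (hξ : 0 < ξ) :
    IntervalIntegrable (firstPassageDensity a) volume 0 ξ := by
  rcases lt_trichotomy a 0 with ha | rfl | ha
  · rw [← neg_neg a, firstPassageDensity_neg]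
    exact (integral_firstPassageDensity_of_pos (neg_pos.2 ha) hξ).1.neg
  · rw [firstPassageDensity_zero]
    exact IntervalIntegrable.zero
  · exact (integral_firstPassageDensity_of_pos ha hξ).1

lemma integral_firstPassageDensity (a : ℝ) {ξ : ℝ} (hξ : 0 < ξ) :
    ∫ t in (0:ℝ)..ξ, firstPassageDensity a t = Real.sign a - erf (a / (2 * √ξ)) := by
  rcases lt_trichotomy a 0 with ha | rfl | ha
  · have h := (integral_firstPassageDensity_of_pos (neg_pos.2 ha) hξ).2
    simp only [firstPassageDensity_neg, Pi.neg_apply, intervalIntegral.integral_neg, neg_div,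
      erf_neg] at h
    rw [sign_of_neg ha]
    linarith
  · simp [firstPassageDensity_zero, Real.sign_zero, erf]
  · rw [(integral_firstPassageDensity_of_pos ha hξ).2, sign_of_pos ha]

lemma firstPassageDensity_le {a t ξ : ℝ} (ha : 0 ≤ a) (ht : 0 < t) (htξ : t ≤ ξ) :
    firstPassageDensity a t ≤ √2 * exp (-a ^ 2 / (8 * ξ)) * firstPassageDensity (a / √2) t := by
  have hsplit : firstPassageDensity a t =
      √2 * exp (-a ^ 2 / (8 * t)) * firstPassageDensity (a / √2) t := by
    have hexp :
        exp (-a ^ 2 / (4 * t)) = exp (-a ^ 2 / (8 * t)) * exp (-(a / √2) ^ 2 / (4 * t)) := by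
      rw [← exp_add, div_pow, sq_sqrt zero_le_two]; congr 1; field_simp; ring
    rw [firstPassageDensity, firstPassageDensity, hexp]
    field_simp
  have hmono : exp (-a ^ 2 / (8 * t)) ≤ exp (-a ^ 2 / (8 * ξ)) := by
    rw [exp_le_exp, neg_div, neg_div, neg_le_neg_iff]
    gcongr
  rw [hsplit]
  gcongr
  exact firstPassageDensity_nonneg (by positivity) ht.le

lemma integral_firstPassageDensity_le {a ξ : ℝ} (ha : 0 ≤ a) (hξ : 0 < ξ) :
    ∫ t in (0:ℝ)..ξ, firstPassageDensity a t ≤ √2 * exp (-a ^ 2 / (8 * ξ)) := by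
  have hint := intervalIntegrable_firstPassageDensity (a / √2) hξ
  have hle : ∫ t in (0:ℝ)..ξ, firstPassageDensity (a / √2) t ≤ 1 := by
    rw [integral_firstPassageDensity _ hξ]
    have := erf_nonneg (x := a / √2 / (2 * √ξ)) (by positivity)
    rcases sign_apply_eq (a / √2) with h | h | h <;> linarith
  calc ∫ t in (0:ℝ)..ξ, firstPassageDensity a t
      ≤ ∫ t in (0:ℝ)..ξ, √2 * exp (-a ^ 2 / (8 * ξ)) * firstPassageDensity (a / √2) t :=
        integral_mono_on_of_le_Ioo hξ.le (intervalIntegrable_firstPassageDensity a hξ)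
          (hint.const_mul _) fun t ht => firstPassageDensity_le ha ht.1 ht.2.le
    _ ≤ √2 * exp (-a ^ 2 / (8 * ξ)) * 1 := by
        rw [intervalIntegral.integral_const_mul]
        gcongr
    _ = √2 * exp (-a ^ 2 / (8 * ξ)) := mul_one _

lemma integral_norm_firstPassageDensity_le (a : ℝ) {ξ : ℝ} (hξ : 0 < ξ) :
    ∫ t in Ioc 0 ξ, ‖firstPassageDensity a t‖ ≤ √2 * exp (-a ^ 2 / (8 * ξ)) := by
  rw [setIntegral_congr_fun measurableSet_Ioc fun t ht => norm_firstPassageDensity a ht.1.le,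
    ← integral_of_le hξ.le, ← sq_abs a]
  exact integral_firstPassageDensity_le (abs_nonneg a) hξ

lemma hasSum_integral_firstPassageDensity {ι : Type*} [Countable ι] {a : ι → ℝ} {ξ : ℝ}
    (hξ : 0 < ξ) (ha : Summable fun i => exp (-a i ^ 2 / (8 * ξ))) :
    HasSum (fun i => ∫ t in (0:ℝ)..ξ, firstPassageDensity (a i) t)
      (∫ t in (0:ℝ)..ξ, ∑' i, firstPassageDensity (a i) t) := by
  simp only [integral_of_le hξ.le]
  refine hasSum_integral_of_summable_integral_norm
    (fun i => (intervalIntegrable_firstPassageDensity (a i) hξ).1) ?_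
  exact (ha.mul_left √2).of_nonneg_of_le (fun i => integral_nonneg fun _ => norm_nonneg _)
    fun i => integral_norm_firstPassageDensity_le (a i) hξ

lemma abs_intCast_le_abs_add_two_mul {y : ℝ} (hy0 : 0 ≤ y) (hy1 : y ≤ 1) (n : ℤ) :
    |(n:ℝ)| ≤ |y + 2 * n| := by
  rcases le_or_gt 0 n with hn | hn
  · have : (0:ℝ) ≤ n := by exact_mod_cast hn
    rw [abs_of_nonneg this, abs_of_nonneg (by linarith)]
    linarith
  · have : (n:ℝ) ≤ -1 := by exact_mod_cast Int.le_sub_one_of_lt hn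
    rw [abs_of_neg (by linarith), abs_of_neg (by linarith)]
    linarith

/-- For `y ∈ (0,1)` and `ξ > 0`, with
`G₀(t,y) = (1/(2√π t^{3/2})) Σ_{n∈ℤ} (y+2n) e^{-(y+2n)²/(4t)}`, one has
`∫₀^ξ G₀(t,y) dt = (2/√π) Σ_{n≥0} ∫_{(y+2n)/(2√ξ)}^{(2n+2−y)/(2√ξ)} e^{-t²} dt`. -/
theorem G0_integral_representation
    (G₀ : ℝ → ℝ → ℝ)
    (hG₀ : ∀ t y : ℝ, 0 < t → G₀ t y =
      (1 / (2 * Real.sqrt Real.pi * t ^ ((3:ℝ)/2))) *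
        ∑' n : ℤ, (y + 2 * n) * Real.exp (-(y + 2 * n) ^ 2 / (4 * t)))
    (y : ℝ) (hy : y ∈ Set.Ioo (0:ℝ) 1) (ξ : ℝ) (hξ : 0 < ξ) :
    ∫ t in (0:ℝ)..ξ, G₀ t y =
      (2 / Real.sqrt Real.pi) *
        ∑' n : ℕ, ∫ t in ((y + 2 * n) / (2 * Real.sqrt ξ))..((2 * n + 2 - y) / (2 * Real.sqrt ξ)),
          Real.exp (-t ^ 2) := by
  obtain ⟨hy0, hy1⟩ := hy
  have hG : ∀ t ∈ Ioc 0 ξ, G₀ t y = ∑' n : ℤ, firstPassageDensity (y + 2 * n) t := fun t ht => by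
    rw [hG₀ t y ht.1, ← tsum_mul_left]
    simp only [one_div_mul_eq_div, firstPassageDensity]
  have hsum := hasSum_integral_firstPassageDensity hξ
    (summable_exp_neg_sq_div (by positivity) (abs_intCast_le_abs_add_two_mul hy0.le hy1.le))
  rw [integral_congr_ae (Eventually.of_forall fun t ht => hG t (uIoc_of_le hξ.le ▸ ht)),
    ← hsum.nat_add_neg_add_one.tsum_eq, ← tsum_mul_left]
  refine tsum_congr fun n => ?_
  have hpos : 0 < y + 2 * (n:ℝ) := by positivity
  have hneg : y + 2 * -((n:ℝ) + 1) < 0 := by linarith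
  push_cast
  rw [integral_firstPassageDensity _ hξ, integral_firstPassageDensity _ hξ, sign_of_pos hpos,
    sign_of_neg hneg, show (y + 2 * -((n:ℝ) + 1)) / (2 * √ξ) = -((2 * n + 2 - y) / (2 * √ξ)) by
    ring, erf_neg, ← erf_sub_erf]
  ring
end

section
/- For every ξ > 0 and y ∈ (0,1), ∫₀^ξ G₀(t,y) dt ≥ 0, with strict inequality for y ∈ (0,1); equality in the limit only at y = 1. -/
/-!
Write `ψ(x, t) = x e^{-x²/4t} / (2√π t^{3/2})`, so that `G₀(t, y) = ∑ₙ ψ(y + 2n, t)`, and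
`E(s) = ∫_s^∞ e^{-u²} du`. For `x > 0`, `ψ(x, ·)` is the derivative of `t ↦ (2/√π) E(x / (2√t))`,
which tends to `0` as `t → 0⁺`; hence `∫₀^ξ ψ(x, t) dt = (2/√π) E(x / (2√ξ))`, and `ψ` is odd in
`x`. These integrals are dominated by a Gaussian theta series in `n`, so the sum may be integrated
termwise. Pairing the image points `y + 2n` and `y - 2(n + 1) = -(2n + 2 - y)` then gives
`∫₀^ξ G₀ = (2/√π) ∑_{n ≥ 0} (E((y + 2n) / (2√ξ)) - E((2n + 2 - y) / (2√ξ)))`, a sum of positive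
terms since `E` is strictly decreasing and `y + 2n < 2n + 2 - y`.
-/

open Real MeasureTheory Set Filter Topology

/-- `(√π / 2) · erfc s`. -/
noncomputable def gaussTail (s : ℝ) : ℝ := ∫ u in Ioi s, exp (-u ^ 2)

lemma integrable_exp_neg_sq : Integrable fun u : ℝ => exp (-u ^ 2) := by
  simpa using integrable_exp_neg_mul_sq one_pos

lemma gaussTail_eq_sub (s : ℝ) :
    gaussTail s = (∫ u in Ioi 0, exp (-u ^ 2)) - ∫ u in 0..s, exp (-u ^ 2) := by
  rw [gaussTail, ← intervalIntegral.integral_interval_add_Ioi integrable_exp_neg_sq.integrableOn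
    integrable_exp_neg_sq.integrableOn, intervalIntegral.integral_symm]
  ring

lemma hasDerivAt_gaussTail (s : ℝ) : HasDerivAt gaussTail (-exp (-s ^ 2)) s := by
  have hcont : Continuous fun u : ℝ => exp (-u ^ 2) := by fun_prop
  simpa [funext gaussTail_eq_sub] using
    ((hcont.integral_hasStrictDerivAt 0 s).hasDerivAt.const_sub _)

lemma gaussTail_strictAnti : StrictAnti gaussTail :=
  strictAnti_of_hasDerivAt_neg hasDerivAt_gaussTail fun _ => neg_neg_of_pos (exp_pos _)

lemma gaussTail_le {s : ℝ} (hs : 0 ≤ s) : gaussTail s ≤ √(2 * π) * exp (-s ^ 2 / 2) := by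
  have hint : Integrable fun u : ℝ => exp (-(1 / 2) * u ^ 2) :=
    integrable_exp_neg_mul_sq (by norm_num)
  calc gaussTail s ≤ ∫ u in Ioi s, exp (-s ^ 2 / 2) * exp (-(1 / 2) * u ^ 2) := by
        refine setIntegral_mono_on integrable_exp_neg_sq.integrableOn
          (hint.const_mul _).integrableOn measurableSet_Ioi fun u (hu : s < u) => ?_
        rw [← exp_add]
        gcongr
        nlinarith
    _ ≤ exp (-s ^ 2 / 2) * ∫ u, exp (-(1 / 2) * u ^ 2) := by
        rw [integral_const_mul]
        exact mul_le_mul_of_nonneg_left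
          (setIntegral_le_integral hint (.of_forall fun _ => (exp_pos _).le)) (exp_pos _).le
    _ = √(2 * π) * exp (-s ^ 2 / 2) := by
        rw [integral_gaussian, mul_comm]
        norm_num [div_div_eq_mul_div, mul_comm]

lemma gaussTail_nonneg (s : ℝ) : 0 ≤ gaussTail s :=
  setIntegral_nonneg measurableSet_Ioi fun _ _ => (exp_pos _).le

lemma tendsto_gaussTail_atTop : Tendsto gaussTail atTop (𝓝 0) := by
  have hbound : Tendsto (fun s : ℝ => √(2 * π) * exp (-s ^ 2 / 2)) atTop (𝓝 0) := by
    have hexponent : Tendsto (fun s : ℝ => -s ^ 2 / 2) atTop atBot := by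
      simpa [neg_div] using
        (tendsto_pow_atTop two_ne_zero).atTop_div_const (two_pos : (0 : ℝ) < 2)
    simpa using (tendsto_exp_atBot.comp hexponent).const_mul (√(2 * π))
  exact squeeze_zero' (.of_forall gaussTail_nonneg)
    ((eventually_ge_atTop 0).mono fun _ => gaussTail_le) hbound

/-- For `x > 0`, the density of the first time the diffusion `∂ₜ = ∂ₓ²` started at `0` hits
`x` (a Lévy density); `G₀(t, y) = ∑ₙ levyDensity (y + 2n) t`. -/
noncomputable def levyDensity (x t : ℝ) : ℝ :=
  1 / (2 * √π * t ^ ((3 : ℝ) / 2)) * (x * exp (-x ^ 2 / (4 * t)))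

lemma levyDensity_neg (x t : ℝ) : levyDensity (-x) t = -levyDensity x t := by
  simp [levyDensity]

lemma levyDensity_nonneg {x t : ℝ} (hx : 0 ≤ x) (ht : 0 ≤ t) : 0 ≤ levyDensity x t := by
  unfold levyDensity; positivity

lemma abs_levyDensity (x : ℝ) {t : ℝ} (ht : 0 ≤ t) : |levyDensity x t| = levyDensity |x| t := by
  simp only [levyDensity, abs_mul, sq_abs, abs_of_nonneg (exp_pos _).le]
  rw [abs_of_nonneg (by positivity)]

lemma hasDerivAt_div_two_sqrt (x : ℝ) {t : ℝ} (ht : 0 < t) :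
    HasDerivAt (fun t => x / (2 * √t)) (-x / (4 * t ^ ((3 : ℝ) / 2))) t := by
  have hsqrt : HasDerivAt (fun t => 2 * √t) (1 / √t) t := by
    refine (((hasDerivAt_id t).sqrt ht.ne').const_mul 2).congr_deriv ?_
    simp only [id]
    field_simp
  refine ((hasDerivAt_const t x).div hsqrt (by positivity)).congr_deriv ?_
  rw [show (3 : ℝ) / 2 = 1 + 1 / 2 by norm_num, rpow_add ht, rpow_one, ← sqrt_eq_rpow]
  field_simp
  rw [sq_sqrt ht.le]
  ring

lemma hasDerivAt_gaussTail_div_two_sqrt (x : ℝ) {t : ℝ} (ht : 0 < t) :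
    HasDerivAt (fun t => 2 / √π * gaussTail (x / (2 * √t))) (levyDensity x t) t := by
  refine (((hasDerivAt_gaussTail _).comp t (hasDerivAt_div_two_sqrt x ht)).const_mul
    (2 / √π)).congr_deriv ?_
  rw [levyDensity, div_pow, mul_pow, sq_sqrt ht.le]
  field_simp
  ring_nf

lemma tendsto_gaussTail_div_two_sqrt {x : ℝ} (hx : 0 < x) :
    Tendsto (fun t => 2 / √π * gaussTail (x / (2 * √t))) (𝓝[>] 0) (𝓝 0) := by
  have hsqrt : Tendsto (fun t => 2 * √t) (𝓝[>] 0) (𝓝[>] 0) := by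
    refine tendsto_nhdsWithin_of_tendsto_nhds_of_eventually_within _ ?_ ?_
    · simpa using ((continuous_sqrt.tendsto 0).const_mul 2).mono_left nhdsWithin_le_nhds
    · filter_upwards [self_mem_nhdsWithin] with t (ht : 0 < t)
      exact mul_pos two_pos (sqrt_pos.2 ht)
  have harg : Tendsto (fun t => x / (2 * √t)) (𝓝[>] 0) atTop := by
    simpa [div_eq_mul_inv] using (tendsto_inv_nhdsGT_zero.comp hsqrt).const_mul_atTop hx
  simpa using (tendsto_gaussTail_atTop.comp harg).const_mul (2 / √π)

lemma integrableOn_Ioc_deriv_of_nonneg_of_tendsto {g g' : ℝ → ℝ} {a b l : ℝ}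
    (hderiv : ∀ x ∈ Ioc a b, HasDerivAt g (g' x) x) (hpos : ∀ x ∈ Ioo a b, 0 ≤ g' x)
    (hlim : Tendsto g (𝓝[>] a) (𝓝 l)) : IntegrableOn g' (Ioc a b) := by
  classical
  refine intervalIntegral.integrableOn_deriv_of_nonneg (g := Function.update g a l) ?_
    (fun x hx => ?_) hpos
  · have hIoc : Icc a b \ {a} ⊆ Ioc a b := fun x hx => ⟨hx.1.1.lt_of_ne' hx.2, hx.1.2⟩
    rw [continuousOn_update_iff]
    exact ⟨fun x hx => (hderiv x (hIoc hx)).continuousAt.continuousWithinAt,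
      fun _ => hlim.mono_left (nhdsWithin_mono _ fun x hx => (hIoc hx).1)⟩
  · refine (hderiv x (Ioo_subset_Ioc_self hx)).congr_of_eventuallyEq ?_
    filter_upwards [Ioi_mem_nhds hx.1] with z hz
    exact Function.update_of_ne hz.ne' _ _

lemma integrableOn_levyDensity_of_pos {x : ℝ} (hx : 0 < x) (ξ : ℝ) :
    IntegrableOn (levyDensity x) (Ioc 0 ξ) :=
  integrableOn_Ioc_deriv_of_nonneg_of_tendsto
    (fun _ ht => hasDerivAt_gaussTail_div_two_sqrt x ht.1)
    (fun _ ht => levyDensity_nonneg hx.le ht.1.le) (tendsto_gaussTail_div_two_sqrt hx)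

lemma integrableOn_levyDensity (x ξ : ℝ) : IntegrableOn (levyDensity x) (Ioc 0 ξ) := by
  rcases lt_trichotomy x 0 with hx | rfl | hx
  · refine (integrableOn_levyDensity_of_pos (neg_pos.2 hx) ξ).neg.congr_fun
      (fun t _ => ?_) measurableSet_Ioc
    rw [Pi.neg_apply, ← levyDensity_neg, neg_neg]
  · have hzero : levyDensity 0 = 0 := funext fun t => by simp [levyDensity]
    exact hzero ▸ integrableOn_zero
  · exact integrableOn_levyDensity_of_pos hx ξ

lemma integral_levyDensity {x ξ : ℝ} (hx : 0 < x) (hξ : 0 < ξ) :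
    ∫ t in Ioc 0 ξ, levyDensity x t = 2 / √π * gaussTail (x / (2 * √ξ)) := by
  have hderiv := fun t (ht : 0 < t) => hasDerivAt_gaussTail_div_two_sqrt x ht
  rw [← intervalIntegral.integral_of_le hξ.le,
    intervalIntegral.integral_eq_sub_of_hasDerivAt_of_tendsto hξ (fun t ht => hderiv t ht.1)
      ((intervalIntegrable_iff_integrableOn_Ioc_of_le hξ.le).2 (integrableOn_levyDensity x ξ))
      (tendsto_gaussTail_div_two_sqrt hx)
      ((hderiv ξ hξ).continuousAt.tendsto.mono_left nhdsWithin_le_nhds), sub_zero]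

lemma integral_norm_levyDensity_le {x ξ : ℝ} (hx : x ≠ 0) (hξ : 0 < ξ) :
    ∫ t in Ioc 0 ξ, ‖levyDensity x t‖ ≤ 2 * √2 * exp (-x ^ 2 / (8 * ξ)) := by
  simp only [norm_eq_abs]
  rw [setIntegral_congr_fun measurableSet_Ioc fun t ht => abs_levyDensity x ht.1.le,
    integral_levyDensity (abs_pos.2 hx) hξ]
  calc 2 / √π * gaussTail (|x| / (2 * √ξ))
      ≤ 2 / √π * (√(2 * π) * exp (-(|x| / (2 * √ξ)) ^ 2 / 2)) := by
        gcongr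
        exact gaussTail_le (by positivity)
    _ = 2 * √2 * exp (-x ^ 2 / (8 * ξ)) := by
        rw [div_pow, mul_pow, sq_abs, sq_sqrt hξ.le, sqrt_mul zero_le_two]
        field_simp
        ring_nf

lemma integral_levyDensity_add_neg_pos {a b ξ : ℝ} (ha : 0 < a) (hab : a < b) (hξ : 0 < ξ) :
    0 < (∫ t in Ioc 0 ξ, levyDensity a t) + ∫ t in Ioc 0 ξ, levyDensity (-b) t := by
  simp only [levyDensity_neg, integral_neg, integral_levyDensity ha hξ,
    integral_levyDensity (ha.trans hab) hξ, ← sub_eq_add_neg, ← mul_sub]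
  have hgap : gaussTail (b / (2 * √ξ)) < gaussTail (a / (2 * √ξ)) :=
    gaussTail_strictAnti (div_lt_div_of_pos_right hab (by positivity))
  have : 0 < 2 / √π := by positivity
  nlinarith

lemma summable_exp_neg_sq_add_two_mul (y : ℝ) {c : ℝ} (hc : 0 < c) :
    Summable fun n : ℤ => exp (-(y + 2 * n) ^ 2 / c) := by
  refine (HurwitzZeta.hasSum_int_evenKernel (y / 2) (t := 4 / (π * c))
    (by positivity)).summable.congr fun n => ?_
  congr 1
  field_simp
  ring

/-- For every `ξ > 0` and `y ∈ (0,1)`, `∫₀^ξ G₀(t,y) dt ≥ 0`, and the inequality is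
strict for `y ∈ (0,1)` (equality occurring only in the limiting case `y = 1`). -/
theorem G0_integral_pos
    (G₀ : ℝ → ℝ → ℝ)
    (hG₀ : ∀ t y : ℝ, 0 < t → G₀ t y =
      (1 / (2 * Real.sqrt Real.pi * t ^ ((3:ℝ)/2))) *
        ∑' n : ℤ, (y + 2 * n) * Real.exp (-(y + 2 * n) ^ 2 / (4 * t)))
    (ξ : ℝ) (hξ : 0 < ξ) (y : ℝ) (hy : y ∈ Set.Ioo (0:ℝ) 1) :
    0 < ∫ t in (0:ℝ)..ξ, G₀ t y := by
  obtain ⟨hy0, hy1⟩ := hy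
  have hne : ∀ n : ℤ, y + 2 * n ≠ 0 := fun n h => by
    have h1 : (0 : ℝ) < -n := by linarith
    have h2 : (-n : ℝ) < 1 := by linarith
    norm_cast at h1 h2
    omega
  have hG : ∀ t ∈ Ioc 0 ξ, G₀ t y = ∑' n : ℤ, levyDensity (y + 2 * n) t := fun t ht => by
    rw [hG₀ t y ht.1, ← tsum_mul_left]
    rfl
  have hsum : HasSum (fun n : ℤ => ∫ t in Ioc 0 ξ, levyDensity (y + 2 * n) t)
      (∫ t in Ioc 0 ξ, ∑' n : ℤ, levyDensity (y + 2 * n) t) :=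
    hasSum_integral_of_summable_integral_norm (fun n => integrableOn_levyDensity _ ξ)
      (((summable_exp_neg_sq_add_two_mul y (by positivity : 0 < 8 * ξ)).mul_left
        (2 * √2)).of_nonneg_of_le (fun _ => integral_nonneg fun _ => norm_nonneg _)
        fun n => integral_norm_levyDensity_le (hne n) hξ)
  have hpair (n : ℕ) : 0 < (∫ t in Ioc 0 ξ, levyDensity (y + 2 * (n : ℤ)) t) +
      ∫ t in Ioc 0 ξ, levyDensity (y + 2 * ((-(n + 1) : ℤ) : ℝ)) t := by
    rw [show y + 2 * ((-(n + 1) : ℤ) : ℝ) = -(2 * n + 2 - y) by push_cast; ring]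
    exact integral_levyDensity_add_neg_pos (by positivity) (by push_cast; linarith) hξ
  rw [intervalIntegral.integral_of_le hξ.le, setIntegral_congr_fun measurableSet_Ioc hG,
    ← hsum.nat_add_neg_add_one.tsum_eq]
  exact hsum.nat_add_neg_add_one.summable.tsum_pos (fun n => (hpair n).le) 0 (hpair 0)
end
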